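/- arXiv:2001.08032 — 3 statements merged into one kernel-verified Lean document; each statement's English description precedes it below -/
import Mathlib

section
/- Let u, v : [0,∞) → (0,∞) be continuous with u(t) ~ A·t^{-a} and v(t) ~ B·t^{-b} as t → ∞, where a > 1, 0 < b < a, and u is integrable on [0,∞). Then the convolution (u * v)(t) = ∫₀^t u(t-s) v(s) ds satisfies (u * v)(t) ~ (∫₀^∞ u(s) ds)·B·t^{-b} as t → ∞. -/
/-!
Write the convolution as `∫₀^t u(s) v(t - s) ds` and split at `t/2`. On `[0, t/2]`,
`v(t - s) / t^(-b) → B` for each fixed `s` and stays bounded (as `t - s ≥ t/2`), so dominated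
convergence against the integrable `u` gives `(∫₀^∞ u) · B`. On `[t/2, t]`, `|u| = O(t^(-a))` while
`∫₀^(t/2) |v| = O(t^p)` for every `p > max (1 - b) 0`; since `a > 1` and `a > b`, `p` can be taken
below `a - b`, which makes this piece `o(t^(-b))`.
-/

open MeasureTheory Filter Set Asymptotics Topology

theorem isLittleO_rpow_rpow_atTop_of_lt {p q : ℝ} (h : p < q) :
    (fun t : ℝ => t ^ p) =o[atTop] fun t => t ^ q := by
  refine (isLittleO_iff_tendsto' ?_).mpr ?_
  · filter_upwards [eventually_gt_atTop 0] with t ht h0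
    exact absurd h0 (Real.rpow_pos_of_pos ht q).ne'
  · refine (tendsto_rpow_neg_atTop (sub_pos.mpr h)).congr' ?_
    filter_upwards [eventually_gt_atTop 0] with t ht
    rw [← Real.rpow_sub ht, neg_sub]

theorem isBigO_rpow_of_tendsto_div_rpow {f : ℝ → ℝ} {c L : ℝ}
    (h : Tendsto (fun t => f t / t ^ c) atTop (𝓝 L)) : f =O[atTop] fun t => t ^ c := by
  refine isBigO_of_div_tendsto_nhds ?_ L h
  filter_upwards [eventually_gt_atTop 0] with t ht h0
  exact absurd h0 (Real.rpow_pos_of_pos ht c).ne'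

theorem tendsto_div_rpow_of_tendsto_div_mul_rpow {f : ℝ → ℝ} {C c : ℝ} (hC : C ≠ 0)
    (h : Tendsto (fun t => f t / (C * t ^ c)) atTop (𝓝 1)) :
    Tendsto (fun t => f t / t ^ c) atTop (𝓝 C) := by
  simpa [mul_div_assoc', mul_div_mul_left _ _ hC] using h.const_mul C

theorem tendsto_comp_sub_div_rpow {f : ℝ → ℝ} {c L : ℝ}
    (h : Tendsto (fun t => f t / t ^ c) atTop (𝓝 L)) (s : ℝ) :
    Tendsto (fun t => f (t - s) / t ^ c) atTop (𝓝 L) := by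
  have hshift : Tendsto (fun t => f (t - s) / (t - s) ^ c) atTop (𝓝 L) :=
    h.comp (tendsto_atTop_add_const_right atTop (-s) tendsto_id)
  have hratio : Tendsto (fun t : ℝ => ((t - s) / t) ^ c) atTop (𝓝 1) := by
    have : Tendsto (fun t : ℝ => 1 - s * t⁻¹) atTop (𝓝 (1 - s * 0)) :=
      tendsto_const_nhds.sub (tendsto_inv_atTop_zero.const_mul s)
    rw [mul_zero, sub_zero] at this
    refine (Real.one_rpow c ▸ this.rpow_const (Or.inl one_ne_zero)).congr' ?_
    filter_upwards [eventually_ne_atTop 0] with t ht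
    field_simp
  refine (mul_one L ▸ hshift.mul hratio).congr' ?_
  filter_upwards [eventually_gt_atTop (max s 0)] with t ht
  have ht0 : 0 < t := (le_max_right s 0).trans_lt ht
  have hts : 0 < t - s := sub_pos.mpr ((le_max_left s 0).trans_lt ht)
  rw [Real.div_rpow hts.le ht0.le]
  field_simp [(Real.rpow_pos_of_pos hts c).ne']

theorem isBigO_integral_abs_rpow {v : ℝ → ℝ} {p : ℝ} (hv_cont : Continuous v) (hp : 0 < p)
    (hv : v =O[atTop] fun t => t ^ (p - 1)) :
    (fun τ => ∫ s in (0:ℝ)..τ, |v s|) =O[atTop] fun τ => τ ^ p := by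
  obtain ⟨K, hK0, hK⟩ := hv.exists_pos
  obtain ⟨T, hT⟩ := eventually_atTop.mp (hK.bound.and (eventually_ge_atTop 1))
  set M := ∫ s in (0:ℝ)..T, |v s|
  refine IsBigO.of_bound (M + K / p) ?_
  filter_upwards [eventually_ge_atTop T, eventually_ge_atTop 1] with τ hτ hτ1
  have hτp : 1 ≤ τ ^ p := Real.one_le_rpow hτ1 hp.le
  have hT1 : 1 ≤ T := (hT T le_rfl).2
  have htail : ∫ s in T..τ, |v s| ≤ K / p * τ ^ p := by
    calc ∫ s in T..τ, |v s| ≤ ∫ s in T..τ, K * s ^ (p - 1) := by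
          refine intervalIntegral.integral_mono_on hτ (hv_cont.abs.intervalIntegrable _ _)
            ((intervalIntegral.intervalIntegrable_rpow' (by linarith : -1 < p - 1)).const_mul K) ?_
          intro s hs
          have h := (hT s hs.1).1
          rwa [Real.norm_eq_abs, Real.norm_eq_abs,
            abs_of_nonneg (Real.rpow_nonneg (by linarith [hs.1]) _)] at h
      _ = K / p * (τ ^ p - T ^ p) := by
          rw [intervalIntegral.integral_const_mul, integral_rpow (Or.inl (by linarith)),
            sub_add_cancel]
          ring
      _ ≤ K / p * τ ^ p := by
          have : 0 ≤ T ^ p := Real.rpow_nonneg (by linarith) p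
          have : 0 ≤ K / p := by positivity
          nlinarith
  have hsplit := intervalIntegral.integral_add_adjacent_intervals
    (hv_cont.abs.intervalIntegrable (μ := volume) 0 T) (hv_cont.abs.intervalIntegrable T τ)
  have hM : 0 ≤ M := intervalIntegral.integral_nonneg (by linarith) fun _ _ => abs_nonneg _
  have hW : 0 ≤ ∫ s in (0:ℝ)..τ, |v s| :=
    intervalIntegral.integral_nonneg (by linarith) fun _ _ => abs_nonneg _
  rw [Real.norm_eq_abs, Real.norm_eq_abs, abs_of_nonneg hW, ← hsplit,
    abs_of_nonneg (by positivity)]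
  nlinarith

theorem abs_integral_mul_comp_sub_le {u v : ℝ → ℝ} {a b t C : ℝ} (hab : a ≤ b)
    (hv_cont : Continuous v) (hu : ∀ s ∈ Icc a b, |u s| ≤ C) :
    |∫ s in a..b, u s * v (t - s)| ≤ C * ∫ s in (t - b)..(t - a), |v s| := by
  calc |∫ s in a..b, u s * v (t - s)| ≤ ∫ s in a..b, C * |v (t - s)| := by
        refine intervalIntegral.norm_integral_le_of_norm_le (f := fun s => u s * v (t - s)) hab
          (ae_of_all volume fun s hs => ?_)
          (((hv_cont.comp (continuous_sub_left t)).abs.intervalIntegrable _ _).const_mul C)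
        rw [Real.norm_eq_abs, abs_mul]
        exact mul_le_mul_of_nonneg_right (hu s (Ioc_subset_Icc_self hs)) (abs_nonneg _)
    _ = C * ∫ s in (t - b)..(t - a), |v s| := by
        rw [intervalIntegral.integral_const_mul, intervalIntegral.integral_comp_sub_left
          (fun s => |v s|)]

theorem eventually_abs_comp_sub_le_rpow {v : ℝ → ℝ} {b : ℝ} (hb : 0 ≤ b)
    (hv : v =O[atTop] fun t => t ^ (-b)) :
    ∃ K > 0, ∀ᶠ t in atTop, ∀ s ≤ t / 2, |v (t - s)| ≤ K * t ^ (-b) := by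
  obtain ⟨K, hK0, hK⟩ := hv.exists_pos
  obtain ⟨T, hT⟩ := eventually_atTop.mp (hK.bound.and (eventually_gt_atTop 0))
  refine ⟨K * 2 ^ b, by positivity, ?_⟩
  filter_upwards [eventually_ge_atTop (2 * T)] with t ht s hs
  have hT0 : 0 < T := (hT T le_rfl).2
  have ht2 : T ≤ t / 2 := by linarith
  have hts : t / 2 ≤ t - s := by linarith
  have h := (hT (t - s) (ht2.trans hts)).1
  rw [Real.norm_eq_abs, Real.norm_eq_abs,
    abs_of_nonneg (Real.rpow_nonneg (by linarith) _)] at h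
  calc |v (t - s)| ≤ K * (t - s) ^ (-b) := h
    _ ≤ K * (t / 2) ^ (-b) :=
        mul_le_mul_of_nonneg_left
          (Real.rpow_le_rpow_of_nonpos (by linarith) hts (neg_nonpos.mpr hb)) hK0.le
    _ = K * 2 ^ b * t ^ (-b) := by
        rw [Real.div_rpow (by linarith) zero_le_two, Real.rpow_neg zero_le_two, div_inv_eq_mul]
        ring

theorem isLittleO_integral_mul_comp_sub_rpow {u v : ℝ → ℝ} {a b : ℝ}
    (hv_cont : Continuous v) (ha : 1 < a) (hba : b < a) (hu : u =O[atTop] fun t => t ^ (-a))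
    (hv : v =O[atTop] fun t => t ^ (-b)) :
    (fun t => ∫ s in (t / 2)..t, u s * v (t - s)) =o[atTop] fun t => t ^ (-b) := by
  obtain ⟨p, hp_gt, hpa⟩ :=
    exists_between (max_lt (by linarith : 1 - b < a - b) (sub_pos.mpr hba))
  have hp : 0 < p := (le_max_right _ _).trans_lt hp_gt
  have hpb : -b < p - 1 := by linarith [(le_max_left (1 - b) 0).trans_lt hp_gt]
  have hW := isBigO_integral_abs_rpow hv_cont hp
    (hv.trans (isLittleO_rpow_rpow_atTop_of_lt hpb).isBigO)
  obtain ⟨C, hC0, hC⟩ := hu.exists_pos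
  obtain ⟨T, hT⟩ := eventually_atTop.mp (hC.bound.and (eventually_gt_atTop 0))
  have hR : (fun t => ∫ s in (t / 2)..t, u s * v (t - s)) =O[atTop]
      ((fun t => t ^ (-a)) * fun t => ∫ s in (0:ℝ)..t, |v s|) := by
    refine IsBigO.of_bound (C * 2 ^ a) ?_
    filter_upwards [eventually_ge_atTop (2 * T)] with t ht
    have hT0 : 0 < T := (hT T le_rfl).2
    have ht0 : 0 < t := by linarith
    have hu_le : ∀ s ∈ Icc (t / 2) t, |u s| ≤ C * (t / 2) ^ (-a) := fun s hs => by
      have h := (hT s (by linarith [hs.1])).1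
      rw [Real.norm_eq_abs, Real.norm_eq_abs,
        abs_of_nonneg (Real.rpow_nonneg (by linarith [hs.1]) _)] at h
      exact h.trans (mul_le_mul_of_nonneg_left
        (Real.rpow_le_rpow_of_nonpos (by linarith) hs.1 (by linarith)) hC0.le)
    have hmono : ∫ s in (0:ℝ)..(t / 2), |v s| ≤ ∫ s in (0:ℝ)..t, |v s| :=
      intervalIntegral.integral_mono_interval le_rfl (by linarith) (by linarith)
        (ae_of_all _ fun _ => abs_nonneg _) (hv_cont.abs.intervalIntegrable _ _)
    have h := abs_integral_mul_comp_sub_le (t := t) (by linarith) hv_cont hu_le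
    rw [sub_self, sub_half] at h
    rw [Real.norm_eq_abs, Real.norm_eq_abs, Pi.mul_apply, abs_mul,
      abs_of_pos (Real.rpow_pos_of_pos ht0 _), abs_of_nonneg (intervalIntegral.integral_nonneg
        ht0.le fun _ _ => abs_nonneg _)]
    calc _ ≤ _ := h
      _ ≤ C * (t / 2) ^ (-a) * ∫ s in (0:ℝ)..t, |v s| :=
          mul_le_mul_of_nonneg_left hmono (by positivity)
      _ = C * 2 ^ a * (t ^ (-a) * ∫ s in (0:ℝ)..t, |v s|) := by
          rw [Real.div_rpow ht0.le zero_le_two, Real.rpow_neg zero_le_two, div_inv_eq_mul]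
          ring
  refine (hR.trans ((isBigO_refl (fun t : ℝ => t ^ (-a)) atTop).mul_atTop_rpow_of_isBigO_rpow
    _ _ _ hW (neg_add_eq_sub a p).le)).trans_isLittleO (isLittleO_rpow_rpow_atTop_of_lt ?_)
  linarith

theorem tendsto_integral_mul_comp_sub_div_rpow {u v : ℝ → ℝ} {b L : ℝ} (hb : 0 ≤ b)
    (hu_int : IntegrableOn u (Ioi 0)) (hv_cont : Continuous v)
    (hv : Tendsto (fun t => v t / t ^ (-b)) atTop (𝓝 L)) :
    Tendsto (fun t => (∫ s in (0:ℝ)..(t / 2), u s * v (t - s)) / t ^ (-b)) atTop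
      (𝓝 ((∫ s in Ioi 0, u s) * L)) := by
  set F : ℝ → ℝ → ℝ := fun t => (Ioc 0 (t / 2)).indicator fun s => u s * (v (t - s) / t ^ (-b))
  obtain ⟨K, hK0, hK⟩ :=
    eventually_abs_comp_sub_le_rpow hb (isBigO_rpow_of_tendsto_div_rpow hv)
  have hF : Tendsto (fun t => ∫ s in Ioi 0, F t s) atTop (𝓝 (∫ s in Ioi 0, u s * L)) := by
    refine tendsto_integral_filter_of_dominated_convergence (fun s => K * ‖u s‖) ?_ ?_
      (hu_int.norm.const_mul K) ?_
    · exact Eventually.of_forall fun t => (hu_int.aestronglyMeasurable.mul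
        ((hv_cont.comp (continuous_sub_left t)).div_const _).aestronglyMeasurable).indicator
          measurableSet_Ioc
    · filter_upwards [hK, eventually_gt_atTop 0] with t hKt ht
      refine ae_of_all _ fun s => ?_
      simp only [F]
      by_cases hs : s ∈ Ioc 0 (t / 2)
      · have htb := Real.rpow_pos_of_pos ht (-b)
        rw [indicator_of_mem hs, norm_mul, Real.norm_eq_abs (v (t - s) / _), abs_div,
          abs_of_pos htb, mul_comm K]
        exact mul_le_mul_of_nonneg_left ((div_le_iff₀ htb).mpr (hKt s hs.2)) (norm_nonneg _)
      · rw [indicator_of_notMem hs, norm_zero]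
        positivity
    · refine (ae_restrict_iff' measurableSet_Ioi).mpr (ae_of_all _ fun s hs => ?_)
      refine (tendsto_const_nhds.mul (tendsto_comp_sub_div_rpow hv s)).congr' ?_
      filter_upwards [eventually_ge_atTop (2 * s)] with t ht
      simp only [F]
      rw [indicator_of_mem (show s ∈ Ioc 0 (t / 2) from ⟨hs, by linarith⟩)]
  rw [integral_mul_const] at hF
  refine hF.congr' ?_
  filter_upwards [eventually_gt_atTop 0] with t ht
  simp only [F]
  rw [setIntegral_indicator measurableSet_Ioc, inter_eq_right.mpr Ioc_subset_Ioi_self,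
    ← intervalIntegral.integral_of_le (by linarith), ← intervalIntegral.integral_div]
  simp only [mul_div_assoc]

theorem integral_comp_sub_mul_eq_integral_mul_comp_sub (u v : ℝ → ℝ) (t : ℝ) :
    ∫ s in (0:ℝ)..t, u (t - s) * v s = ∫ s in (0:ℝ)..t, u s * v (t - s) := by
  simpa only [sub_sub_cancel, sub_self, sub_zero] using
    intervalIntegral.integral_comp_sub_left (fun s => u s * v (t - s)) (a := 0) (b := t) t

theorem tendsto_convolution_div_rpow {u v : ℝ → ℝ} {a b L : ℝ} (hu_cont : Continuous u)
    (hv_cont : Continuous v) (ha : 1 < a) (hb : 0 ≤ b) (hba : b < a)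
    (hu : u =O[atTop] fun t => t ^ (-a)) (hu_int : IntegrableOn u (Ioi 0))
    (hv : Tendsto (fun t => v t / t ^ (-b)) atTop (𝓝 L)) :
    Tendsto (fun t => (∫ s in (0:ℝ)..t, u (t - s) * v s) / t ^ (-b)) atTop
      (𝓝 ((∫ s in Ioi 0, u s) * L)) := by
  have hmain := tendsto_integral_mul_comp_sub_div_rpow hb hu_int hv_cont hv
  have hrem := (isLittleO_integral_mul_comp_sub_rpow hv_cont ha hba hu
    (isBigO_rpow_of_tendsto_div_rpow hv)).tendsto_div_nhds_zero
  refine (add_zero ((∫ s in Ioi 0, u s) * L) ▸ hmain.add hrem).congr fun t => ?_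
  have hcont : Continuous fun s => u s * v (t - s) :=
    hu_cont.mul (hv_cont.comp (continuous_sub_left t))
  rw [← add_div, intervalIntegral.integral_add_adjacent_intervals
    (hcont.intervalIntegrable _ _) (hcont.intervalIntegrable _ _),
    integral_comp_sub_mul_eq_integral_mul_comp_sub]

theorem stmt8_general (u v : ℝ → ℝ)
    (hu_cont : Continuous u) (hv_cont : Continuous v)
    (hu_pos : ∀ t : ℝ, 0 ≤ t → 0 < u t)
    (A B a b : ℝ) (hA : 0 < A) (hB : 0 < B) (ha : 1 < a) (hb : 0 < b) (hba : b < a)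
    (hu : Tendsto (fun t : ℝ => u t / (A * t ^ (-a))) atTop (nhds 1))
    (hv : Tendsto (fun t : ℝ => v t / (B * t ^ (-b))) atTop (nhds 1))
    (hu_int : IntegrableOn u (Set.Ioi 0) volume) :
    Tendsto
      (fun t : ℝ =>
        (∫ s in (0:ℝ)..t, u (t - s) * v s) /
          ((∫ s in Set.Ioi (0:ℝ), u s) * B * t ^ (-b)))
      atTop (nhds 1) := by
  have hI : 0 < ∫ s in Ioi (0:ℝ), u s := by
    refine (setIntegral_pos_iff_support_of_nonneg_ae
      ((ae_restrict_iff' measurableSet_Ioi).mpr (ae_of_all _ fun s hs => (hu_pos s hs.le).le))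
      hu_int).mpr ?_
    have hsupp : Ioi (0:ℝ) ⊆ Function.support u := fun s hs => (hu_pos s (le_of_lt hs)).ne'
    simp [inter_eq_right.mpr hsupp]
  have hconv := tendsto_convolution_div_rpow hu_cont hv_cont ha hb.le hba
    (isBigO_rpow_of_tendsto_div_rpow (tendsto_div_rpow_of_tendsto_div_mul_rpow hA.ne' hu))
    hu_int (tendsto_div_rpow_of_tendsto_div_mul_rpow hB.ne' hv)
  refine (div_self (mul_pos hI hB).ne' ▸ hconv.div_const _).congr fun t => ?_
  rw [div_div, mul_comm (t ^ (-b)), mul_assoc]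

/-- convolution asymptotics: if `u ~ A t^{-a}` is integrable and
`v ~ B t^{-b}` with `a > 1`, `0 < b < a`, then
`(u*v)(t) ~ (∫₀^∞ u) · B · t^{-b}`. -/
theorem stmt8 (u v : ℝ → ℝ)
    (hu_cont : Continuous u) (hv_cont : Continuous v)
    (hu_pos : ∀ t : ℝ, 0 ≤ t → 0 < u t) (hv_pos : ∀ t : ℝ, 0 ≤ t → 0 < v t)
    (A B a b : ℝ) (hA : 0 < A) (hB : 0 < B) (ha : 1 < a) (hb : 0 < b) (hba : b < a)
    (hu : Tendsto (fun t : ℝ => u t / (A * t ^ (-a))) atTop (nhds 1))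
    (hv : Tendsto (fun t : ℝ => v t / (B * t ^ (-b))) atTop (nhds 1))
    (hu_int : IntegrableOn u (Set.Ioi 0) volume) :
    Tendsto
      (fun t : ℝ =>
        (∫ s in (0:ℝ)..t, u (t - s) * v s) /
          ((∫ s in Set.Ioi (0:ℝ), u s) * B * t ^ (-b)))
      atTop (nhds 1) :=
  stmt8_general u v hu_cont hv_cont hu_pos A B a b hA hB ha hb hba hu hv hu_int
end

section
/- Let p(t,x,y) be the transition probabilities of a continuous-time symmetric homogeneous random walk on ℤ^d satisfying p(t,x,y) ~ h·t^{-d/α} as t → ∞ uniformly in the spatial variables (h > 0, d/α > 1), so that G₀(x,y) := ∫₀^∞ p(t,x,y) dt < ∞. Let β < β_c := 1/G₀(0,0) with β > 0, and let m(t,x) solve m(t,x) = 1 + β ∫₀^t m(s,x,0) ds together with the corresponding local first-moment equations. Then lim_{t→∞} m(t,x) = (1 − β(G₀(0,0) − G₀(x,0)))/(1 − β G₀(0,0)). -/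
/-!
On `(0, ∞)` put `P = p · 0 0`, `u = mloc · 0` and `v = mloc · x`. The local equations say
`u = P + β (P ∗ u)` and `v = p · x 0 + β (p · x 0 ∗ u)`, where `f ∗ g` is the convolution
`t ↦ ∫₀ᵗ f (t - s) g s ds`. Once `u` is integrable, integrating over `(0, ∞)` and using Tonelli
gives `∫ u = G 0 0 (1 + β ∫ u)` and `∫ v = G x 0 (1 + β ∫ u)`, and
`m t x = 1 + β ∫₀ᵗ v → 1 + β ∫ v`, which is the claimed limit.

The work is the integrability of `u`: neither measurability nor integrability is assumed, and
the Bochner integral in the equation is `0` where the convolution is not integrable. Where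
`s ↦ P (t - s) u s` is integrable on `(0, t)`, dividing by `P > 0` makes `u` measurable there;
elsewhere `u = P`. In `ℝ≥0∞` one has `u ≤ P + β (P ∗ u)`, which bounds `∫_{(-∞, T]} u` by
`G 0 0 / (1 - β G 0 0)` as soon as it is finite. It cannot become infinite: just after the first
time `T₀` at which it does, `u` has infinite mass near `T₀`, while `P ∗ u` is bounded on some
set `A` of positive measure at positive distance after `T₀` (where `P ∗ u = ∞` we have `u = P`,
of finite mass). But `∫_A P ∗ u` is at least `min_s ∫_A P (t - s) dt` times the mass of `u` near
`T₀`, and that minimum is positive by continuity of translation in `L¹`.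
-/

open MeasureTheory Filter Set
open scoped ENNReal

section LConvolution

variable {G : Type*} [MeasurableSpace G] [AddGroup G] [MeasurableAdd₂ G]
  {μ : Measure G} [μ.IsAddLeftInvariant] {f g : G → ℝ≥0∞}

theorem aemeasurable_comp_neg_add (hg : AEMeasurable g μ) (y : G) :
    AEMeasurable (fun x => g (-y + x)) μ :=
  hg.comp_quasiMeasurePreserving (measurePreserving_add_left μ (-y)).quasiMeasurePreserving

variable [MeasurableNeg G] [SFinite μ]

theorem lintegral_lconvolution (hf : AEMeasurable f μ) (hg : AEMeasurable g μ) :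
    ∫⁻ x, (f ⋆ₗ[μ] g) x ∂μ = (∫⁻ x, f x ∂μ) * ∫⁻ x, g x ∂μ := by
  simp only [lconvolution_def]
  rw [lintegral_lintegral_swap (by fun_prop)]
  simp_rw [lintegral_const_mul'' _ (aemeasurable_comp_neg_add hg _), lintegral_add_left_eq_self g]
  exact lintegral_mul_const'' _ hf

theorem mul_setLIntegral_le_setLIntegral_lconvolution (hf : AEMeasurable f μ)
    (hg : AEMeasurable g μ) {A M : Set G} (hM : MeasurableSet M) {δ : ℝ≥0∞}
    (hδ : ∀ s ∈ M, δ ≤ ∫⁻ t in A, g (-s + t) ∂μ) :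
    δ * ∫⁻ s in M, f s ∂μ ≤ ∫⁻ t in A, (f ⋆ₗ[μ] g) t ∂μ := by
  have hprod : AEMeasurable (Function.uncurry fun s t => f s * g (-s + t))
      ((μ.restrict M).prod (μ.restrict A)) := by
    rw [Measure.prod_restrict]
    exact AEMeasurable.restrict (by fun_prop)
  calc δ * ∫⁻ s in M, f s ∂μ = ∫⁻ s in M, δ * f s ∂μ :=
        (lintegral_const_mul'' _ hf.restrict).symm
    _ ≤ ∫⁻ s in M, f s * ∫⁻ t in A, g (-s + t) ∂μ ∂μ :=
        setLIntegral_mono' hM fun s hs => by rw [mul_comm]; gcongr; exact hδ s hs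
    _ = ∫⁻ s in M, ∫⁻ t in A, f s * g (-s + t) ∂μ ∂μ := by
        simp_rw [lintegral_const_mul'' _ (aemeasurable_comp_neg_add hg _).restrict]
    _ = ∫⁻ t in A, ∫⁻ s in M, f s * g (-s + t) ∂μ ∂μ := lintegral_lintegral_swap hprod
    _ ≤ ∫⁻ t in A, (f ⋆ₗ[μ] g) t ∂μ := lintegral_mono fun t => setLIntegral_le_lintegral _ _

end LConvolution

theorem setLIntegral_Iic_lconvolution_le {f g : ℝ → ℝ≥0∞} (hf : AEMeasurable f)
    (hg : AEMeasurable g) (hg_neg : ∀ t < 0, g t = 0) (T : ℝ) :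
    ∫⁻ t in Iic T, (f ⋆ₗ g) t ≤ (∫⁻ t in Iic T, f t) * ∫⁻ t, g t := by
  have htrunc : ∀ t ∈ Iic T, (f ⋆ₗ g) t = ((Iic T).indicator f ⋆ₗ g) t := by
    intro t ht
    refine lintegral_congr fun s => ?_
    by_cases hs : s ≤ T
    · rw [indicator_of_mem (mem_Iic.2 hs)]
    · rw [indicator_of_notMem (by simpa using hs), hg_neg _ (by simp at ht; linarith), mul_zero,
        zero_mul]
  calc ∫⁻ t in Iic T, (f ⋆ₗ g) t = ∫⁻ t in Iic T, ((Iic T).indicator f ⋆ₗ g) t :=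
        setLIntegral_congr_fun measurableSet_Iic htrunc
    _ ≤ ∫⁻ t, ((Iic T).indicator f ⋆ₗ g) t := setLIntegral_le_lintegral _ _
    _ = (∫⁻ t in Iic T, f t) * ∫⁻ t, g t := by
        rw [lintegral_lconvolution (hf.indicator measurableSet_Iic) hg,
          lintegral_indicator measurableSet_Iic]

theorem ENNReal.le_div_one_sub_of_le_add_mul {a b c : ℝ≥0∞} (ha : a ≠ ∞) (hc : c < 1)
    (h : a ≤ b + c * a) : a ≤ b / (1 - c) := by
  rw [ENNReal.le_div_iff_mul_le (Or.inl (tsub_pos_of_lt hc).ne')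
    (Or.inl (ENNReal.sub_ne_top ENNReal.one_ne_top)), ENNReal.mul_sub fun _ _ => ha, mul_one,
    tsub_le_iff_right, mul_comm]
  exact h

theorem setLIntegral_Iic_le_of_le_add_lconvolution {f g : ℝ → ℝ≥0∞} {c : ℝ≥0∞}
    (hf : AEMeasurable f) (hg : AEMeasurable g) (hg_neg : ∀ t < 0, g t = 0)
    (hfg : ∀ t, f t ≤ g t + c * (f ⋆ₗ g) t) (hc : c * ∫⁻ t, g t < 1) {T : ℝ}
    (hT : ∫⁻ t in Iic T, f t ≠ ∞) :
    ∫⁻ t in Iic T, f t ≤ (∫⁻ t, g t) / (1 - c * ∫⁻ t, g t) := by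
  refine ENNReal.le_div_one_sub_of_le_add_mul hT hc ?_
  calc ∫⁻ t in Iic T, f t ≤ ∫⁻ t in Iic T, (g t + c * (f ⋆ₗ g) t) := lintegral_mono hfg
    _ = (∫⁻ t in Iic T, g t) + c * ∫⁻ t in Iic T, (f ⋆ₗ g) t := by
        rw [lintegral_add_left' hg.restrict, lintegral_const_mul'' _
          (aemeasurable_lconvolution hf hg).restrict]
    _ ≤ (∫⁻ t, g t) + c * ((∫⁻ t in Iic T, f t) * ∫⁻ t, g t) := by
        gcongr
        · exact Measure.restrict_le_self
        · exact setLIntegral_Iic_lconvolution_le hf hg hg_neg T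
    _ = (∫⁻ t, g t) + c * (∫⁻ t, g t) * ∫⁻ t in Iic T, f t := by ring

theorem setLIntegral_Iic_le_of_forall_lt {f : ℝ → ℝ≥0∞} {x : ℝ} {C : ℝ≥0∞}
    (h : ∀ T < x, ∫⁻ t in Iic T, f t ≤ C) : ∫⁻ t in Iic x, f t ≤ C := by
  have hIio : Iio x = ⋃ n : ℕ, Iic (x - 1 / (n + 1)) := by
    ext t
    simp only [mem_Iio, mem_iUnion, mem_Iic]
    refine ⟨fun ht => ?_, fun ⟨n, hn⟩ => hn.trans_lt (sub_lt_self _ Nat.one_div_pos_of_nat)⟩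
    obtain ⟨n, hn⟩ := exists_nat_one_div_lt (sub_pos.2 ht)
    exact ⟨n, by linarith⟩
  have hmono : Monotone fun n : ℕ => Iic (x - 1 / ((n : ℝ) + 1)) := fun m n hmn =>
    Iic_subset_Iic.2 (sub_le_sub_left (Nat.one_div_le_one_div hmn) x)
  rw [← restrict_Iio_eq_restrict_Iic, hIio, setLIntegral_iUnion_of_directed _ hmono.directed_le]
  exact iSup_le fun n => h _ (sub_lt_self _ Nat.one_div_pos_of_nat)

theorem continuous_setIntegral_comp_sub {f : ℝ → ℝ} (hf : Integrable f) {A : Set ℝ}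
    (hA : volume A ≠ ∞) : Continuous fun r => ∫ t in A, f (t - r) := by
  refine continuous_of_uniform_approx_of_continuous fun U hU => ?_
  obtain ⟨ε, hε, hεU⟩ := Metric.mem_uniformity_dist.1 hU
  obtain ⟨φ, hφ_supp, hφ_approx, hφ_cont, hφ_int⟩ :=
    hf.exists_hasCompactSupport_integral_sub_le (half_pos hε)
  refine ⟨fun r => ∫ t in A, φ (t - r), ?_, fun r => hεU ?_⟩
  · obtain ⟨C, hC⟩ := hφ_cont.bounded_above_of_compact_support hφ_supp
    exact continuous_of_dominated
      (fun r => (by fun_prop : Continuous fun t => φ (t - r)).aestronglyMeasurable)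
      (fun r => ae_of_all _ fun t => hC _) (integrableOn_const hA)
      (ae_of_all _ fun t => by fun_prop)
  · have hdiff : Integrable (fun t => f (t - r) - φ (t - r)) :=
      (hf.comp_sub_right r).sub (hφ_int.comp_sub_right r)
    calc dist (∫ t in A, f (t - r)) (∫ t in A, φ (t - r))
        = ‖∫ t in A, (f (t - r) - φ (t - r))‖ := by
          rw [dist_eq_norm, integral_sub (hf.comp_sub_right r).integrableOn
            (hφ_int.comp_sub_right r).integrableOn]
      _ ≤ ∫ t in A, ‖f (t - r) - φ (t - r)‖ := norm_integral_le_integral_norm _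
      _ ≤ ∫ t, ‖f (t - r) - φ (t - r)‖ :=
          setIntegral_le_integral hdiff.norm (ae_of_all _ fun _ => norm_nonneg _)
      _ = ∫ t, ‖f t - φ t‖ := integral_sub_right_eq_self (fun t => ‖f t - φ t‖) r
      _ < ε := hφ_approx.trans_lt (half_lt_self hε)

theorem exists_pos_le_setIntegral_comp_sub {f : ℝ → ℝ} (hf : Integrable f)
    (hf_pos : ∀ t, 0 < t → 0 < f t) {A : Set ℝ} (hA : MeasurableSet A) (hA_pos : volume A ≠ 0)
    (hA_fin : volume A ≠ ∞) {a b : ℝ} (hab : a ≤ b) (hbA : ∀ t ∈ A, b < t) :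
    ∃ δ > 0, ∀ s ∈ Icc a b, δ ≤ ∫ t in A, f (t - s) := by
  obtain ⟨s₀, hs₀, hmin⟩ := isCompact_Icc.exists_isMinOn (nonempty_Icc.2 hab)
    (continuous_setIntegral_comp_sub hf hA_fin).continuousOn
  have hpos : ∀ t ∈ A, 0 < f (t - s₀) := fun t ht => hf_pos _ (by linarith [hbA t ht, hs₀.2])
  refine ⟨_, ?_, hmin⟩
  show 0 < ∫ t in A, f (t - s₀)
  rw [setIntegral_pos_iff_support_of_nonneg_ae
    ((ae_restrict_iff' hA).2 (ae_of_all _ fun t ht => (hpos t ht).le))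
    (hf.comp_sub_right s₀).integrableOn,
    inter_eq_right.2 fun t ht => Function.mem_support.2 (hpos t ht).ne']
  exact pos_iff_ne_zero.2 hA_pos

theorem exists_setLIntegral_Ioc_ne_top {f : ℝ → ℝ} (hf : Integrable f)
    (hf_pos : ∀ t, 0 < t → 0 < f t) {U : ℝ → ℝ≥0∞} (hU : AEMeasurable U)
    (hU_le : ∀ᵐ t, (U ⋆ₗ fun s => ENNReal.ofReal (f s)) t = ∞ → U t ≤ ENNReal.ofReal (f t))
    (x : ℝ) : ∃ ε > 0, ∫⁻ t in Ioc x (x + ε), U t ≠ ∞ := by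
  set F : ℝ → ℝ≥0∞ := fun s => ENNReal.ofReal (f s)
  have hF : AEMeasurable F := hf.aemeasurable.ennreal_ofReal
  have hconv := aemeasurable_lconvolution hU hF
  set conv := hconv.mk (U ⋆ₗ F)
  by_contra! hmass
  have hfinite : volume ({t | conv t ≠ ∞} ∩ Ioc x (x + 1)) ≠ 0 := by
    intro h0
    refine ne_top_of_le_ne_top hf.lintegral_lt_top.ne ?_ (hmass 1 one_pos)
    calc ∫⁻ t in Ioc x (x + 1), U t ≤ ∫⁻ t in Ioc x (x + 1), F t := by
          refine lintegral_mono_ae ((ae_restrict_iff' measurableSet_Ioc).2 ?_)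
          filter_upwards [hU_le, hconv.ae_eq_mk, measure_eq_zero_iff_ae_notMem.1 h0]
            with t ht hmk h0t hmem
          exact ht (by rw [hmk]; by_contra hne; exact h0t ⟨hne, hmem⟩)
      _ ≤ ∫⁻ t, F t := setLIntegral_le_lintegral _ _
  set A : ℕ × ℕ → Set ℝ := fun k => {t | conv t ≤ k.1} ∩ Ioc (x + 1 / (k.2 + 1)) (x + 1)
  obtain ⟨⟨m, n⟩, hA_pos⟩ : ∃ k, volume (A k) ≠ 0 := by
    by_contra! hA
    refine hfinite (measure_mono_null (fun t ⟨ht, hx⟩ => ?_) (measure_iUnion_null hA))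
    obtain ⟨m, hm⟩ := ENNReal.exists_nat_gt ht
    obtain ⟨n, hn⟩ := exists_nat_one_div_lt (sub_pos.2 hx.1)
    exact mem_iUnion.2 ⟨(m, n), hm.le, by linarith, hx.2⟩
  set σ : ℝ := 1 / (n + 1)
  have hσ : 0 < σ := Nat.one_div_pos_of_nat
  have hA_meas : MeasurableSet (A (m, n)) :=
    (measurableSet_le hconv.measurable_mk measurable_const).inter measurableSet_Ioc
  have hA_fin : volume (A (m, n)) ≠ ∞ :=
    ne_top_of_le_ne_top (by simp) (measure_mono inter_subset_right)
  obtain ⟨δ, hδ, hδ_le⟩ := exists_pos_le_setIntegral_comp_sub hf hf_pos hA_meas hA_pos hA_fin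
    (a := x) (b := x + σ / 2) (by linarith) fun t ht => by linarith [ht.2.1]
  have hkernel : ∀ s ∈ Ioc x (x + σ / 2), ENNReal.ofReal δ ≤ ∫⁻ t in A (m, n), F (-s + t) := by
    intro s hs
    simp_rw [F, neg_add_eq_sub]
    rw [← ofReal_integral_eq_lintegral_ofReal (hf.comp_sub_right s).integrableOn
      ((ae_restrict_iff' hA_meas).2 (ae_of_all _ fun t ht =>
        (hf_pos _ (by linarith [ht.2.1, hs.2])).le))]
    exact ENNReal.ofReal_le_ofReal (hδ_le s (Ioc_subset_Icc_self hs))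
  have hlower := mul_setLIntegral_le_setLIntegral_lconvolution hU hF measurableSet_Ioc hkernel
  rw [hmass _ (half_pos hσ), ENNReal.mul_top (ENNReal.ofReal_pos.2 hδ).ne'] at hlower
  have hupper : ∫⁻ t in A (m, n), (U ⋆ₗ F) t ≤ m * volume (A (m, n)) := by
    rw [lintegral_congr_ae (ae_restrict_of_ae hconv.ae_eq_mk), ← setLIntegral_const]
    exact setLIntegral_mono measurable_const fun t ht => ht.1
  exact ENNReal.mul_ne_top (ENNReal.natCast_ne_top m) hA_fin
    (top_le_iff.1 (hlower.trans hupper))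

theorem setLIntegral_Iic_ne_top_of_bound {f : ℝ → ℝ} (hf : Integrable f)
    (hf_pos : ∀ t, 0 < t → 0 < f t) {U : ℝ → ℝ≥0∞} (hU : AEMeasurable U)
    (hU_nonpos : ∀ t ≤ 0, U t = 0)
    (hU_le : ∀ᵐ t, (U ⋆ₗ fun s => ENNReal.ofReal (f s)) t = ∞ → U t ≤ ENNReal.ofReal (f t))
    {C : ℝ≥0∞} (hC : C ≠ ∞) (hbound : ∀ T, ∫⁻ t in Iic T, U t ≠ ∞ → ∫⁻ t in Iic T, U t ≤ C)
    (T : ℝ) : ∫⁻ t in Iic T, U t ≠ ∞ := by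
  intro hT
  set S := {T : ℝ | ∫⁻ t in Iic T, U t = ∞}
  have hS : BddBelow S := by
    refine ⟨0, fun T hT => le_of_not_gt fun hT0 => ENNReal.zero_ne_top ?_⟩
    rw [← hT, setLIntegral_congr_fun measurableSet_Iic fun t ht => hU_nonpos t (ht.trans hT0.le),
      lintegral_zero]
  set x := sInf S
  have hx : ∫⁻ t in Iic x, U t ≤ C :=
    setLIntegral_Iic_le_of_forall_lt fun T' hT' => hbound T' fun h => (csInf_le hS h).not_gt hT'
  obtain ⟨ε, hε, hε_fin⟩ := exists_setLIntegral_Ioc_ne_top hf hf_pos hU hU_le x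
  obtain ⟨T', hT'S, hT'⟩ := exists_lt_of_csInf_lt ⟨T, hT⟩ (lt_add_of_pos_right x hε)
  have hfin : ∫⁻ t in Iic (x + ε), U t ≠ ∞ := by
    rw [← Iic_union_Ioc_eq_Iic (le_add_of_nonneg_right hε.le),
      lintegral_union measurableSet_Ioc (Iic_disjoint_Ioc le_rfl)]
    exact ENNReal.add_ne_top.2 ⟨ne_top_of_le_ne_top hC hx, hε_fin⟩
  exact hfin (top_le_iff.1 (hT'S ▸ lintegral_mono_set (Iic_subset_Iic.2 hT'.le)))

/-- `f` on `(0, ∞)`, extended by `0`, as an `ℝ≥0∞`-valued function: then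
`(ofRealIoi u ⋆ₗ ofRealIoi P) t = ∫⁻ s in Ioo 0 t, ENNReal.ofReal (P (t - s) * u s)` for
`t > 0` and nonnegative `u`, `P`. -/
noncomputable def ofRealIoi (f : ℝ → ℝ) (t : ℝ) : ℝ≥0∞ := ENNReal.ofReal ((Ioi 0).indicator f t)

section OfRealIoi

variable {f : ℝ → ℝ}

theorem ofRealIoi_of_nonpos {t : ℝ} (ht : t ≤ 0) : ofRealIoi f t = 0 := by
  simp [ofRealIoi, indicator_of_notMem (notMem_Ioi.2 ht)]

theorem ofRealIoi_of_pos {t : ℝ} (ht : 0 < t) : ofRealIoi f t = ENNReal.ofReal (f t) := by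
  simp [ofRealIoi, indicator_of_mem (mem_Ioi.2 ht)]

theorem aemeasurable_ofRealIoi
    (hf : AEStronglyMeasurable f (volume.restrict (Ioi 0))) : AEMeasurable (ofRealIoi f) :=
  ((aestronglyMeasurable_indicator_iff measurableSet_Ioi).2 hf).aemeasurable.ennreal_ofReal

theorem lintegral_ofRealIoi (hf : IntegrableOn f (Ioi 0)) (hf_nonneg : ∀ t, 0 < t → 0 ≤ f t) :
    ∫⁻ t, ofRealIoi f t = ENNReal.ofReal (∫ t in Ioi 0, f t) := by
  rw [← integral_indicator measurableSet_Ioi, ofReal_integral_eq_lintegral_ofReal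
    (hf.integrable_indicator measurableSet_Ioi)
    (ae_of_all _ (indicator_nonneg fun t ht => hf_nonneg t ht))]
  rfl

theorem integrableOn_of_lintegral_ofRealIoi_ne_top
    (hf : AEStronglyMeasurable f (volume.restrict (Ioi 0))) (hf_nonneg : ∀ t, 0 < t → 0 ≤ f t)
    (h : ∫⁻ t, ofRealIoi f t ≠ ∞) : IntegrableOn f (Ioi 0) :=
  (integrable_indicator_iff measurableSet_Ioi).1 <|
    (lintegral_ofReal_ne_top_iff_integrable
      ((aestronglyMeasurable_indicator_iff measurableSet_Ioi).2 hf)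
      (ae_of_all _ (indicator_nonneg fun t ht => hf_nonneg t ht))).1 h

theorem lconvolution_ofRealIoi_of_nonpos {g : ℝ → ℝ} {t : ℝ} (ht : t ≤ 0) :
    (ofRealIoi g ⋆ₗ ofRealIoi f) t = 0 := by
  refine (lintegral_congr fun s => ?_).trans lintegral_zero
  rcases le_or_gt s 0 with hs | hs
  · rw [ofRealIoi_of_nonpos hs, zero_mul]
  · rw [ofRealIoi_of_nonpos (t := -s + t) (by linarith), mul_zero]

end OfRealIoi

theorem aestronglyMeasurable_indicator_Ioi_comp_sub {P : ℝ → ℝ}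
    (hP : AEStronglyMeasurable P (volume.restrict (Ioi 0))) (t : ℝ) :
    AEStronglyMeasurable (fun s => (Ioi 0).indicator P (t - s)) volume :=
  ((aestronglyMeasurable_indicator_iff measurableSet_Ioi).2 hP).comp_quasiMeasurePreserving
    (Measure.measurePreserving_sub_left volume t).quasiMeasurePreserving

theorem intervalIntegral_eq_toReal_lconvolution {Q u : ℝ → ℝ}
    (hQ : AEStronglyMeasurable Q (volume.restrict (Ioi 0)))
    (hu : AEStronglyMeasurable u (volume.restrict (Ioi 0)))
    (hQ_nonneg : ∀ t, 0 < t → 0 ≤ Q t) (hu_nonneg : ∀ t, 0 < t → 0 ≤ u t) {t : ℝ}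
    (ht : 0 ≤ t) :
    ∫ s in (0 : ℝ)..t, Q (t - s) * u s = ((ofRealIoi u ⋆ₗ ofRealIoi Q) t).toReal := by
  have htrunc : (Ioo 0 t).indicator (fun s => Q (t - s) * u s) =
      fun s => (Ioi 0).indicator u s * (Ioi 0).indicator Q (t - s) := by
    ext s
    by_cases hs : s ∈ Ioo 0 t
    · rw [indicator_of_mem hs, indicator_of_mem (mem_Ioi.2 hs.1),
        indicator_of_mem (mem_Ioi.2 (sub_pos.2 hs.2)), mul_comm]
    · rw [indicator_of_notMem hs]
      rcases not_and_or.1 hs with hs | hs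
      · rw [indicator_of_notMem (notMem_Ioi.2 (not_lt.1 hs)), zero_mul]
      · rw [indicator_of_notMem (notMem_Ioi.2 (sub_nonpos.2 (not_lt.1 hs))), mul_zero]
  have hu₀ : ∀ s, 0 ≤ (Ioi 0).indicator u s := indicator_nonneg fun s hs => hu_nonneg s hs
  have hQ₀ : ∀ s, 0 ≤ (Ioi 0).indicator Q s := indicator_nonneg fun s hs => hQ_nonneg s hs
  rw [intervalIntegral.integral_of_le ht, integral_Ioc_eq_integral_Ioo,
    ← integral_indicator measurableSet_Ioo, htrunc, integral_eq_lintegral_of_nonneg_ae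
      (ae_of_all _ fun s => mul_nonneg (hu₀ s) (hQ₀ _))
      (((aestronglyMeasurable_indicator_iff measurableSet_Ioi).2 hu).mul
        (aestronglyMeasurable_indicator_Ioi_comp_sub hQ t))]
  simp_rw [lconvolution_def, ofRealIoi, neg_add_eq_sub, ENNReal.ofReal_mul (hu₀ _)]

theorem aestronglyMeasurable_of_integrableOn_mul {P u : ℝ → ℝ}
    (hP : AEStronglyMeasurable P (volume.restrict (Ioi 0))) (hP_pos : ∀ t, 0 < t → 0 < P t)
    {t : ℝ} (h : IntegrableOn (fun s => P (t - s) * u s) (Ioo 0 t)) :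
    AEStronglyMeasurable u (volume.restrict (Ioo 0 t)) := by
  have hkernel : ∀ s ∈ Ioo 0 t, (Ioi 0).indicator P (t - s) = P (t - s) := fun s hs =>
    indicator_of_mem (mem_Ioi.2 (sub_pos.2 hs.2)) _
  have hquot : AEMeasurable (fun s => P (t - s) * u s / (Ioi 0).indicator P (t - s))
      (volume.restrict (Ioo 0 t)) :=
    h.aestronglyMeasurable.aemeasurable.div
      (aestronglyMeasurable_indicator_Ioi_comp_sub hP t).aemeasurable.restrict
  refine aestronglyMeasurable_iff_aemeasurable.2 (hquot.congr ?_)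
  filter_upwards [ae_restrict_mem measurableSet_Ioo] with s hs
  rw [hkernel s hs, mul_div_cancel_left₀ _ (hP_pos _ (sub_pos.2 hs.2)).ne']

theorem aestronglyMeasurable_Ioi_of_forall_Ioo {P u : ℝ → ℝ}
    (hP : AEStronglyMeasurable P (volume.restrict (Ioi 0))) {E : Set ℝ}
    (hE : ∀ t ∈ E, AEStronglyMeasurable u (volume.restrict (Ioo 0 t)))
    (hE_compl : ∀ t, 0 < t → t ∉ E → u t = P t) :
    AEStronglyMeasurable u (volume.restrict (Ioi 0)) := by
  obtain ⟨T, hTE, hT, hTV⟩ :=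
    TopologicalSpace.isOpen_biUnion_countable E (fun t => Ioo 0 t) fun _ _ => isOpen_Ioo
  set V := ⋃ t ∈ E, Ioo (0 : ℝ) t
  have hV : AEStronglyMeasurable u (volume.restrict V) := by
    have := hT.to_subtype
    rw [← hTV, biUnion_eq_iUnion]
    exact aestronglyMeasurable_iUnion_iff.2 fun t => hE t (hTE t.2)
  -- Two points of `E ∩ (0, ∞)` outside `V` would lie in each other's interval `(0, t)`.
  have hsingle : ((E ∩ Ioi 0) \ V).Subsingleton := by
    intro a ⟨⟨haE, ha⟩, haV⟩ b ⟨⟨hbE, hb⟩, hbV⟩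
    by_contra hab
    rcases lt_or_gt_of_ne hab with h | h
    · exact haV (mem_biUnion hbE ⟨ha, h⟩)
    · exact hbV (mem_biUnion haE ⟨hb, h⟩)
  have hrest : AEStronglyMeasurable u (volume.restrict (Ioi 0 \ V)) := by
    refine (hP.mono_set sdiff_subset).congr ?_
    rw [EventuallyEq, ae_restrict_iff' (measurableSet_Ioi.diff
      (isOpen_biUnion fun _ _ => isOpen_Ioo).measurableSet)]
    filter_upwards [measure_eq_zero_iff_ae_notMem.1 (hsingle.measure_zero volume)] with s hs hsV
    exact (hE_compl s hsV.1 fun hsE => hs ⟨⟨hsE, hsV.1⟩, hsV.2⟩).symm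
  exact (aestronglyMeasurable_union_iff.2 ⟨hV, hrest⟩).mono_set fun s hs =>
    (em (s ∈ V)).elim Or.inl fun h => Or.inr ⟨hs, h⟩

section Renewal

variable {P u : ℝ → ℝ} {β : ℝ}

theorem aestronglyMeasurable_of_renewal
    (hP : AEStronglyMeasurable P (volume.restrict (Ioi 0))) (hP_pos : ∀ t, 0 < t → 0 < P t)
    (hu : ∀ t, 0 ≤ t → u t = P t + β * ∫ s in (0 : ℝ)..t, P (t - s) * u s) :
    AEStronglyMeasurable u (volume.restrict (Ioi 0)) := by
  refine aestronglyMeasurable_Ioi_of_forall_Ioo hP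
    (E := {t | IntegrableOn (fun s => P (t - s) * u s) (Ioo 0 t) volume})
    (fun t ht => aestronglyMeasurable_of_integrableOn_mul hP hP_pos ht) fun t ht htE => ?_
  rw [hu t ht.le, intervalIntegral.integral_undef
    (mt (intervalIntegrable_iff_integrableOn_Ioo_of_le ht.le).1 htE), mul_zero, add_zero]

theorem ofRealIoi_le_add_lconvolution
    (h : ∀ t, 0 < t → u t = P t + β * ((ofRealIoi u ⋆ₗ ofRealIoi P) t).toReal) (t : ℝ) :
    ofRealIoi u t ≤ ofRealIoi P t + ENNReal.ofReal β * (ofRealIoi u ⋆ₗ ofRealIoi P) t := by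
  rcases le_or_gt t 0 with ht | ht
  · simp [ofRealIoi_of_nonpos ht]
  rw [ofRealIoi_of_pos ht, ofRealIoi_of_pos ht, h t ht]
  by_cases hconv : (ofRealIoi u ⋆ₗ ofRealIoi P) t = ∞
  · simp [hconv]
  calc ENNReal.ofReal (P t + β * ((ofRealIoi u ⋆ₗ ofRealIoi P) t).toReal)
      ≤ ENNReal.ofReal (P t) + ENNReal.ofReal (β * ((ofRealIoi u ⋆ₗ ofRealIoi P) t).toReal) :=
        ENNReal.ofReal_add_le
    _ = ENNReal.ofReal (P t) + ENNReal.ofReal β * (ofRealIoi u ⋆ₗ ofRealIoi P) t := by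
        rw [ENNReal.ofReal_mul' ENNReal.toReal_nonneg, ENNReal.ofReal_toReal hconv]

theorem ofRealIoi_le_of_lconvolution_eq_top
    (h : ∀ t, 0 < t → u t = P t + β * ((ofRealIoi u ⋆ₗ ofRealIoi P) t).toReal) {t : ℝ}
    (hconv : (ofRealIoi u ⋆ₗ ofRealIoi P) t = ∞) : ofRealIoi u t ≤ ofRealIoi P t := by
  rcases le_or_gt t 0 with ht | ht
  · simp [ofRealIoi_of_nonpos ht]
  rw [ofRealIoi_of_pos ht, ofRealIoi_of_pos ht, h t ht, hconv, ENNReal.toReal_top, mul_zero,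
    add_zero]

theorem integrableOn_of_renewal (hP : IntegrableOn P (Ioi 0)) (hP_pos : ∀ t, 0 < t → 0 < P t)
    (hu_nonneg : ∀ t, 0 < t → 0 ≤ u t)
    (hu : ∀ t, 0 ≤ t → u t = P t + β * ∫ s in (0 : ℝ)..t, P (t - s) * u s)
    (hβ : β * ∫ t in Ioi 0, P t < 1) : IntegrableOn u (Ioi 0) := by
  have hu_meas := aestronglyMeasurable_of_renewal hP.aestronglyMeasurable hP_pos hu
  have hU := aemeasurable_ofRealIoi hu_meas
  have hF := aemeasurable_ofRealIoi hP.aestronglyMeasurable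
  have hF_neg : ∀ t < 0, ofRealIoi P t = 0 := fun t ht => ofRealIoi_of_nonpos ht.le
  have hrenewal : ∀ t, 0 < t → u t = P t + β * ((ofRealIoi u ⋆ₗ ofRealIoi P) t).toReal :=
    fun t ht => by
      rw [hu t ht.le, intervalIntegral_eq_toReal_lconvolution hP.aestronglyMeasurable hu_meas
        (fun s hs => (hP_pos s hs).le) hu_nonneg ht.le]
  have hF_int : ∫⁻ t, ofRealIoi P t = ENNReal.ofReal (∫ t in Ioi 0, P t) :=
    lintegral_ofRealIoi hP fun t ht => (hP_pos t ht).le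
  have hc : ENNReal.ofReal β * ∫⁻ t, ofRealIoi P t < 1 := by
    rw [hF_int, ← ENNReal.ofReal_mul' (setIntegral_nonneg measurableSet_Ioi
      fun t ht => (hP_pos t ht).le)]
    exact ENNReal.ofReal_lt_one.2 hβ
  set C := (∫⁻ t, ofRealIoi P t) / (1 - ENNReal.ofReal β * ∫⁻ t, ofRealIoi P t)
  have hC : C ≠ ∞ := ENNReal.div_ne_top (hF_int ▸ ENNReal.ofReal_ne_top) (tsub_pos_of_lt hc).ne'
  have hbound_of_ne_top : ∀ T, ∫⁻ t in Iic T, ofRealIoi u t ≠ ∞ →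
      ∫⁻ t in Iic T, ofRealIoi u t ≤ C := fun T =>
    setLIntegral_Iic_le_of_le_add_lconvolution hU hF hF_neg
      (ofRealIoi_le_add_lconvolution hrenewal) hc
  have hne_top : ∀ T, ∫⁻ t in Iic T, ofRealIoi u t ≠ ∞ :=
    setLIntegral_Iic_ne_top_of_bound ((integrable_indicator_iff measurableSet_Ioi).2 hP)
      (fun t ht => by simpa [indicator_of_mem (mem_Ioi.2 ht)] using hP_pos t ht) hU
      (fun t ht => ofRealIoi_of_nonpos ht)
      (ae_of_all _ fun t => ofRealIoi_le_of_lconvolution_eq_top hrenewal) hC hbound_of_ne_top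
  refine integrableOn_of_lintegral_ofRealIoi_ne_top hu_meas hu_nonneg (ne_top_of_le_ne_top hC ?_)
  have hmono : Monotone fun r : ℚ => Iic (r : ℝ) := fun r s hrs =>
    Iic_subset_Iic.2 (by exact_mod_cast hrs)
  rw [← setLIntegral_univ, ← Real.iUnion_Iic_rat,
    setLIntegral_iUnion_of_directed _ hmono.directed_le]
  exact iSup_le fun r => hbound_of_ne_top r (hne_top r)

theorem integrableOn_and_integral_of_eq_add_conv {Q v : ℝ → ℝ} (hQ : IntegrableOn Q (Ioi 0))
    (hQ_nonneg : ∀ t, 0 < t → 0 ≤ Q t) (hu_int : IntegrableOn u (Ioi 0))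
    (hu_nonneg : ∀ t, 0 < t → 0 ≤ u t)
    (hv : ∀ t, 0 ≤ t → v t = Q t + β * ∫ s in (0 : ℝ)..t, Q (t - s) * u s) :
    IntegrableOn v (Ioi 0) ∧
      ∫ t in Ioi 0, v t = (∫ t in Ioi 0, Q t) * (1 + β * ∫ t in Ioi 0, u t) := by
  set conv := ofRealIoi u ⋆ₗ ofRealIoi Q
  have hconv_meas : AEMeasurable conv := aemeasurable_lconvolution
    (aemeasurable_ofRealIoi hu_int.aestronglyMeasurable)
    (aemeasurable_ofRealIoi hQ.aestronglyMeasurable)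
  have hconv_total : ∫⁻ t, conv t = ENNReal.ofReal (∫ t in Ioi 0, u t) *
      ENNReal.ofReal (∫ t in Ioi 0, Q t) := by
    rw [lintegral_lconvolution (aemeasurable_ofRealIoi hu_int.aestronglyMeasurable)
      (aemeasurable_ofRealIoi hQ.aestronglyMeasurable), lintegral_ofRealIoi hu_int hu_nonneg,
      lintegral_ofRealIoi hQ hQ_nonneg]
  have hconv_fin : ∫⁻ t, conv t ≠ ∞ :=
    hconv_total ▸ ENNReal.mul_ne_top ENNReal.ofReal_ne_top ENNReal.ofReal_ne_top
  have hconv_int : Integrable fun t => (conv t).toReal :=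
    integrable_toReal_of_lintegral_ne_top hconv_meas hconv_fin
  have hv_eq : EqOn v (fun t => Q t + β * (conv t).toReal) (Ioi 0) := fun t ht => by
    rw [hv t (le_of_lt ht), intervalIntegral_eq_toReal_lconvolution hQ.aestronglyMeasurable
      hu_int.aestronglyMeasurable hQ_nonneg hu_nonneg (le_of_lt ht)]
  have hconv_integral : ∫ t in Ioi 0, (conv t).toReal =
      (∫ t in Ioi 0, u t) * ∫ t in Ioi 0, Q t := by
    rw [setIntegral_eq_integral_of_forall_compl_eq_zero fun t ht => by
        rw [show conv t = 0 from lconvolution_ofRealIoi_of_nonpos (not_lt.1 ht),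
          ENNReal.toReal_zero],
      integral_toReal hconv_meas (ae_lt_top' hconv_meas hconv_fin), hconv_total,
      ENNReal.toReal_mul, ENNReal.toReal_ofReal (setIntegral_nonneg measurableSet_Ioi hu_nonneg),
      ENNReal.toReal_ofReal (setIntegral_nonneg measurableSet_Ioi hQ_nonneg)]
  have hint := hQ.add (hconv_int.integrableOn.const_mul β)
  refine ⟨hint.congr_fun hv_eq.symm measurableSet_Ioi, ?_⟩
  rw [setIntegral_congr_fun measurableSet_Ioi hv_eq, integral_add hQ
    (hconv_int.integrableOn.const_mul β), integral_const_mul, hconv_integral]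
  ring

end Renewal

theorem stmt10_general (d : ℕ)
    (p : ℝ → (Fin d → ℤ) → (Fin d → ℤ) → ℝ)
    (hp_pos : ∀ t : ℝ, 0 < t → ∀ x y, 0 < p t x y)
    (hp_int : ∀ x y, IntegrableOn (fun t => p t x y) (Set.Ioi 0) volume)
    (G : (Fin d → ℤ) → (Fin d → ℤ) → ℝ)
    (hG : ∀ x y, G x y = ∫ t in Set.Ioi (0:ℝ), p t x y)
    (β : ℝ) (hβ : β < 1 / G 0 0)
    (m : ℝ → (Fin d → ℤ) → ℝ) (mloc : ℝ → (Fin d → ℤ) → ℝ)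
    (hmloc_nonneg : ∀ t x, 0 ≤ mloc t x)
    (heq_total : ∀ t : ℝ, 0 ≤ t → ∀ x,
      m t x = 1 + β * ∫ s in (0:ℝ)..t, mloc s x)
    (heq_local : ∀ t : ℝ, 0 ≤ t → ∀ x,
      mloc t x = p t x 0 + β * ∫ s in (0:ℝ)..t, p (t - s) x 0 * mloc s 0) :
    ∀ x, Tendsto (fun t => m t x) atTop
      (nhds ((1 - β * (G 0 0 - G x 0)) / (1 - β * G 0 0))) := by
  intro x
  have hG_nonneg : 0 ≤ G 0 0 :=
    hG 0 0 ▸ setIntegral_nonneg measurableSet_Ioi fun t ht => (hp_pos t ht 0 0).le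
  have hβG : β * G 0 0 < 1 := by
    rcases hG_nonneg.eq_or_lt with h0 | hpos
    · simp [← h0]
    · exact (lt_div_iff₀ hpos).1 hβ
  have hu_int : IntegrableOn (fun t => mloc t 0) (Ioi 0) :=
    integrableOn_of_renewal (hp_int 0 0) (fun t ht => hp_pos t ht 0 0)
      (fun t _ => hmloc_nonneg t 0) (fun t ht => heq_local t ht 0) (hG 0 0 ▸ hβG)
  obtain ⟨-, hu_val⟩ := integrableOn_and_integral_of_eq_add_conv (hp_int 0 0)
    (fun t ht => (hp_pos t ht 0 0).le) hu_int (fun t _ => hmloc_nonneg t 0)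
    (fun t ht => heq_local t ht 0)
  obtain ⟨hv_int, hv_val⟩ := integrableOn_and_integral_of_eq_add_conv (hp_int x 0)
    (fun t ht => (hp_pos t ht x 0).le) hu_int (fun t _ => hmloc_nonneg t 0)
    (fun t ht => heq_local t ht x)
  rw [← hG] at hu_val hv_val
  have hlim :=
    ((intervalIntegral_tendsto_integral_Ioi 0 hv_int tendsto_id).const_mul β).const_add 1
  convert hlim.congr' ((eventually_ge_atTop 0).mono fun t ht => (heq_total t ht x).symm) using 2
  have hne : 1 - β * G 0 0 ≠ 0 := by linarith
  rw [div_eq_iff hne, hv_val]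
  linear_combination (-β ^ 2 * G x 0) * hu_val

/-- limit of the mean population size of a subcritical BRW on a
transient heavy-tailed lattice. -/
theorem stmt10 (d : ℕ) (hd : 0 < d) (α : ℝ) (hα : 0 < α)
    (hq : 1 < (d : ℝ) / α)
    (p : ℝ → (Fin d → ℤ) → (Fin d → ℤ) → ℝ)
    (hp_pos : ∀ t : ℝ, 0 < t → ∀ x y, 0 < p t x y)
    (hp_symm : ∀ t x y, p t x y = p t y x)
    (hp_hom : ∀ t x y z, p t (x + z) (y + z) = p t x y)
    (h : ℝ) (hh : 0 < h)
    (hp_asymp : ∀ ε : ℝ, 0 < ε → ∃ T : ℝ, ∀ t : ℝ, T ≤ t →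
      ∀ x y, |p t x y / (h * t ^ (-((d : ℝ) / α))) - 1| < ε)
    (hp_int : ∀ x y, IntegrableOn (fun t => p t x y) (Set.Ioi 0) volume)
    (G : (Fin d → ℤ) → (Fin d → ℤ) → ℝ)
    (hG : ∀ x y, G x y = ∫ t in Set.Ioi (0:ℝ), p t x y)
    (β : ℝ) (hβ_pos : 0 < β) (hβ : β < 1 / G 0 0)
    (m : ℝ → (Fin d → ℤ) → ℝ) (mloc : ℝ → (Fin d → ℤ) → ℝ)
    (hm_nonneg : ∀ t x, 0 ≤ m t x) (hmloc_nonneg : ∀ t x, 0 ≤ mloc t x)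
    (heq_total : ∀ t : ℝ, 0 ≤ t → ∀ x,
      m t x = 1 + β * ∫ s in (0:ℝ)..t, mloc s x)
    (heq_local : ∀ t : ℝ, 0 ≤ t → ∀ x,
      mloc t x = p t x 0 + β * ∫ s in (0:ℝ)..t, p (t - s) x 0 * mloc s 0) :
    ∀ x, Tendsto (fun t => m t x) atTop
      (nhds ((1 - β * (G 0 0 - G x 0)) / (1 - β * G 0 0))) :=
  stmt10_general d p hp_pos hp_int G hG β hβ m mloc hmloc_nonneg heq_total heq_local
end

section
/- Let G : [0,∞) → (0,∞) be the Green function G(λ) = ∫₀^∞ e^{-λt} p(t) dt of a positive continuous integrable function p with p(t) ~ h t^{-d/α}, d/α ∈ (2,∞), and suppose additionally ∫₀^∞ (∫_t^∞ p(s) ds) dt =: γ < ∞. Then G(0) − G(λ) ~ γ·λ as λ → 0⁺, and consequently the function λ ↦ G(0)·G(λ)/(G(0) − G(λ)) satisfies G(0)G(λ)/(G(0) − G(λ)) ~ G(0)²/γ · λ^{−1} as λ → 0⁺. -/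
open MeasureTheory Filter Set Topology

/-!
With the tail `P t = ∫_t^∞ p`, integration by parts against `1 - e^{-λt}` (the boundary terms
vanish, at `0` because of the factor `1 - e^{-λt}`, at `∞` because `P → 0`) gives
`G(0) - G(λ) = ∫ (1 - e^{-λt}) p(t) dt = λ ∫ e^{-λt} P(t) dt`. By dominated convergence the last
integral tends to `∫ P = γ` as `λ → 0⁺`, and likewise `G(λ) → G(0)`. The second limit is then
algebra: `G(0)G(λ)/(G(0) - G(λ)) · γλ/G(0)² = (G(λ)/G(0)) · (γλ/(G(0) - G(λ)))`.
-/

lemma setIntegral_Ioi_pos {a : ℝ} {f : ℝ → ℝ} (hf : IntegrableOn f (Ioi a))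
    (hpos : ∀ t ∈ Ioi a, 0 < f t) : 0 < ∫ t in Ioi a, f t := by
  rw [setIntegral_pos_iff_support_of_nonneg_ae
    ((ae_restrict_iff' measurableSet_Ioi).2 (.of_forall fun t ht => (hpos t ht).le)) hf]
  calc (0 : ENNReal) < volume (Ioi a) := by simp
    _ ≤ volume (Function.support f ∩ Ioi a) :=
      measure_mono fun t ht => ⟨(hpos t ht).ne', ht⟩

noncomputable def tailIntegral (p : ℝ → ℝ) (t : ℝ) : ℝ := ∫ s in Ioi t, p s

noncomputable def laplaceTransform (f : ℝ → ℝ) (l : ℝ) : ℝ :=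
  ∫ t in Ioi 0, Real.exp (-l * t) * f t

section TailIntegral

variable {p : ℝ → ℝ} {a : ℝ}

lemma tailIntegral_eq_sub (hp : IntegrableOn p (Ioi a)) {t : ℝ} (ht : a ≤ t) :
    tailIntegral p t = (∫ s in Ioi a, p s) - ∫ s in a..t, p s := by
  rw [← Ioc_union_Ioi_eq_Ioi ht, setIntegral_union (Ioc_disjoint_Ioi le_rfl) measurableSet_Ioi
    (hp.mono_set Ioc_subset_Ioi_self) (hp.mono_set (Ioi_subset_Ioi ht)),
    intervalIntegral.integral_of_le ht, tailIntegral]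
  ring

lemma tailIntegral_pos (hp : IntegrableOn p (Ioi a)) (hpos : ∀ s, a < s → 0 < p s) {t : ℝ}
    (ht : a ≤ t) : 0 < tailIntegral p t :=
  setIntegral_Ioi_pos (hp.mono_set (Ioi_subset_Ioi ht)) fun s hs => hpos s (ht.trans_lt hs)

lemma hasDerivAt_tailIntegral (hp_cont : Continuous p) (hp : IntegrableOn p (Ioi a)) {x : ℝ}
    (hx : a < x) : HasDerivAt (tailIntegral p) (-p x) x := by
  have hprim : HasDerivAt (fun t => ∫ s in a..t, p s) (p x) x :=
    hp_cont.integral_hasStrictDerivAt a x |>.hasDerivAt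
  refine (hprim.const_sub (∫ s in Ioi a, p s)).congr_of_eventuallyEq ?_
  filter_upwards [Ioi_mem_nhds hx] with t ht
  exact tailIntegral_eq_sub hp ht.le

lemma continuousOn_tailIntegral (hp_cont : Continuous p) (hp : IntegrableOn p (Ioi a)) :
    ContinuousOn (tailIntegral p) (Ici a) := by
  have hprim : Continuous fun t => ∫ s in a..t, p s :=
    intervalIntegral.continuous_primitive (fun _ _ => hp_cont.intervalIntegrable _ _) a
  exact (continuous_const.sub hprim).continuousOn.congr fun t ht => tailIntegral_eq_sub hp ht

lemma tendsto_tailIntegral_atTop (hp : IntegrableOn p (Ioi a)) :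
    Tendsto (tailIntegral p) atTop (𝓝 0) := by
  have hprim := (intervalIntegral_tendsto_integral_Ioi a hp tendsto_id).const_sub
    (∫ s in Ioi a, p s)
  rw [sub_self] at hprim
  refine hprim.congr' ?_
  filter_upwards [eventually_ge_atTop a] with t ht
  exact (tailIntegral_eq_sub hp ht).symm

end TailIntegral

section LaplaceTransform

variable {f p : ℝ → ℝ} {l : ℝ}

lemma laplaceTransform_zero : laplaceTransform f 0 = ∫ t in Ioi 0, f t := by
  simp [laplaceTransform]

lemma ae_norm_exp_neg_mul_le_one (hl : 0 ≤ l) :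
    ∀ᵐ t ∂volume.restrict (Ioi 0), ‖Real.exp (-l * t)‖ ≤ 1 := by
  refine (ae_restrict_iff' measurableSet_Ioi).2 (.of_forall fun t ht => ?_)
  rw [Real.norm_of_nonneg (Real.exp_nonneg _), Real.exp_le_one_iff]
  nlinarith [mem_Ioi.1 ht]

lemma integrableOn_exp_neg_mul_mul (hf : IntegrableOn f (Ioi 0)) (hl : 0 ≤ l) :
    IntegrableOn (fun t => Real.exp (-l * t) * f t) (Ioi 0) :=
  hf.bdd_mul (by fun_prop) (ae_norm_exp_neg_mul_le_one hl)

lemma continuousOn_laplaceTransform (hf : IntegrableOn f (Ioi 0)) :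
    ContinuousOn (laplaceTransform f) (Ici 0) := by
  refine continuousOn_of_dominated (bound := fun t => ‖f t‖)
    (fun l hl => (integrableOn_exp_neg_mul_mul hf hl).aestronglyMeasurable) (fun l hl => ?_)
    hf.norm (.of_forall fun t => by fun_prop)
  filter_upwards [ae_norm_exp_neg_mul_le_one hl] with t ht
  rw [norm_mul]
  exact mul_le_of_le_one_left (norm_nonneg _) ht

lemma integral_sub_laplaceTransform (hp_cont : Continuous p) (hp : IntegrableOn p (Ioi 0))
    (hP : IntegrableOn (tailIntegral p) (Ioi 0)) (hl : 0 ≤ l) :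
    (∫ t in Ioi 0, p t) - laplaceTransform p l = l * laplaceTransform (tailIntegral p) l := by
  set F : ℝ → ℝ := fun t => (1 - Real.exp (-l * t)) * tailIntegral p t
  set F' : ℝ → ℝ := fun t =>
    l * (Real.exp (-l * t) * tailIntegral p t) - (p t - Real.exp (-l * t) * p t)
  have hderiv : ∀ x ∈ Ioi (0 : ℝ), HasDerivAt F (F' x) x := by
    intro x hx
    have he : HasDerivAt (fun t => 1 - Real.exp (-l * t)) (l * Real.exp (-l * x)) x := by
      refine ((((hasDerivAt_id x).const_mul (-l)).exp).const_sub 1).congr_deriv ?_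
      simp only [id, mul_one]
      ring
    refine (he.mul (hasDerivAt_tailIntegral hp_cont hp hx)).congr_deriv ?_
    simp only [F']
    ring
  have hF0 : ContinuousWithinAt F (Ici 0) 0 :=
    (Continuous.continuousWithinAt (by fun_prop)).mul
      (continuousOn_tailIntegral hp_cont hp 0 self_mem_Ici)
  have hF_top : Tendsto F atTop (𝓝 0) := by
    refine squeeze_zero_norm' ?_ (by simpa using (tendsto_tailIntegral_atTop hp).norm)
    filter_upwards [eventually_ge_atTop 0] with t ht
    have he : Real.exp (-l * t) ≤ 1 := Real.exp_le_one_iff.2 (by nlinarith)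
    rw [norm_mul, Real.norm_of_nonneg (sub_nonneg.2 he)]
    exact mul_le_of_le_one_left (norm_nonneg _) (by linarith [Real.exp_pos (-l * t)])
  have hLP := integrableOn_exp_neg_mul_mul hP hl
  have hLp := integrableOn_exp_neg_mul_mul hp hl
  have hF'_int : ∫ t in Ioi 0, F' t =
      l * laplaceTransform (tailIntegral p) l - ((∫ t in Ioi 0, p t) - laplaceTransform p l) := by
    have hsub : IntegrableOn (fun t => p t - Real.exp (-l * t) * p t) (Ioi 0) := hp.sub hLp
    rw [integral_sub (hLP.const_mul l) hsub, integral_const_mul, integral_sub hp hLp]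
    rfl
  have hFTC := integral_Ioi_of_hasDerivAt_of_tendsto hF0 hderiv
    ((hLP.const_mul l).sub (hp.sub hLp)) hF_top
  have hF_zero : F 0 = 0 := by simp [F]
  rw [hF'_int, hF_zero] at hFTC
  linarith

end LaplaceTransform

lemma tendsto_mul_div_sub_of_tendsto_sub_div {F : Filter ℝ} {A γ : ℝ} {B : ℝ → ℝ} (hA : A ≠ 0)
    (hB : Tendsto B F (𝓝 A)) (h : Tendsto (fun l => (A - B l) / (γ * l)) F (𝓝 1)) :
    Tendsto (fun l => (A * B l / (A - B l)) / (A ^ 2 / γ * l⁻¹)) F (𝓝 1) := by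
  have hratio : Tendsto (fun l => B l / A) F (𝓝 1) := by
    simpa [hA] using hB.div_const A
  have hprod := hratio.mul (h.inv₀ one_ne_zero)
  rw [one_mul, inv_one] at hprod
  refine hprod.congr fun l => ?_
  simp only [div_eq_mul_inv, mul_inv, inv_inv, pow_two]
  field_simp

theorem stmt16_general
    (p : ℝ → ℝ) (hp_cont : Continuous p) (hp_pos : ∀ t : ℝ, 0 ≤ t → 0 < p t)
    (hp_int : IntegrableOn p (Set.Ioi 0) volume)
    (G : ℝ → ℝ)
    (hG : ∀ l : ℝ, 0 ≤ l → G l = ∫ t in Set.Ioi (0:ℝ), Real.exp (-l * t) * p t)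
    (γ : ℝ)
    (hγ : γ = ∫ t in Set.Ioi (0:ℝ), ∫ s in Set.Ioi t, p s)
    (hγ_fin : IntegrableOn (fun t => ∫ s in Set.Ioi t, p s) (Set.Ioi 0) volume) :
    Tendsto (fun l : ℝ => (G 0 - G l) / (γ * l)) (nhdsWithin 0 (Set.Ioi 0)) (nhds 1) ∧
    Tendsto (fun l : ℝ => (G 0 * G l / (G 0 - G l)) / (G 0 ^ 2 / γ * l⁻¹))
      (nhdsWithin 0 (Set.Ioi 0)) (nhds 1) := by
  have hP_int : IntegrableOn (tailIntegral p) (Ioi 0) := hγ_fin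
  have hGL : ∀ l, 0 ≤ l → G l = laplaceTransform p l := hG
  have hG0 : G 0 = ∫ t in Ioi 0, p t := by rw [hGL 0 le_rfl, laplaceTransform_zero]
  have hγL : γ = laplaceTransform (tailIntegral p) 0 := by rw [laplaceTransform_zero, hγ]; rfl
  have hG0_pos : 0 < G 0 := hG0 ▸ setIntegral_Ioi_pos hp_int fun t ht => hp_pos t ht.le
  have hγ_pos : 0 < γ := hγ ▸ setIntegral_Ioi_pos hP_int fun t ht =>
    tailIntegral_pos hp_int (fun s hs => hp_pos s hs.le) ht.le
  have hG_lim : Tendsto G (𝓝[>] 0) (𝓝 (G 0)) := by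
    rw [hGL 0 le_rfl]
    refine ((continuousOn_laplaceTransform hp_int 0 self_mem_Ici).mono
      Ioi_subset_Ici_self).congr' ?_
    filter_upwards [self_mem_nhdsWithin] with l (hl : 0 < l)
    exact (hGL l hl.le).symm
  have hdiff : Tendsto (fun l => (G 0 - G l) / (γ * l)) (𝓝[>] 0) (𝓝 1) := by
    have hP_lim := ((continuousOn_laplaceTransform hP_int 0 self_mem_Ici).mono
      Ioi_subset_Ici_self).tendsto.div_const γ
    rw [← hγL, div_self hγ_pos.ne'] at hP_lim
    refine hP_lim.congr' ?_
    filter_upwards [self_mem_nhdsWithin] with l (hl : 0 < l)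
    rw [hG0, hGL l hl.le, integral_sub_laplaceTransform hp_cont hp_int hP_int hl.le, mul_comm γ,
      mul_div_mul_left _ _ hl.ne']
  exact ⟨hdiff, tendsto_mul_div_sub_of_tendsto_sub_div hG0_pos.ne' hG_lim hdiff⟩

/-- in the strongly transient case `d/α > 2`,
`G(0) − G(λ) ~ γ λ` and `G(0)G(λ)/(G(0) − G(λ)) ~ G(0)²/γ · λ⁻¹` as `λ → 0⁺`. -/
theorem stmt16 (d : ℕ) (hd : 0 < d) (α : ℝ) (hα : 0 < α) (hq : 2 < (d : ℝ) / α)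
    (p : ℝ → ℝ) (hp_cont : Continuous p) (hp_pos : ∀ t : ℝ, 0 ≤ t → 0 < p t)
    (hp_int : IntegrableOn p (Set.Ioi 0) volume)
    (h : ℝ) (hh : 0 < h)
    (hp : Tendsto (fun t : ℝ => p t / (h * t ^ (-((d : ℝ) / α)))) atTop (nhds 1))
    (G : ℝ → ℝ)
    (hG : ∀ l : ℝ, 0 ≤ l → G l = ∫ t in Set.Ioi (0:ℝ), Real.exp (-l * t) * p t)
    (γ : ℝ)
    (hγ : γ = ∫ t in Set.Ioi (0:ℝ), ∫ s in Set.Ioi t, p s)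
    (hγ_fin : IntegrableOn (fun t => ∫ s in Set.Ioi t, p s) (Set.Ioi 0) volume) :
    Tendsto (fun l : ℝ => (G 0 - G l) / (γ * l)) (nhdsWithin 0 (Set.Ioi 0)) (nhds 1) ∧
    Tendsto (fun l : ℝ => (G 0 * G l / (G 0 - G l)) / (G 0 ^ 2 / γ * l⁻¹))
      (nhdsWithin 0 (Set.Ioi 0)) (nhds 1) :=
  stmt16_general p hp_cont hp_pos hp_int G hG γ hγ hγ_fin
end
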